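/- For every q ≥ 2 and n ≥ 0, there exists an orthogonal direct sum decomposition of V(B_q(n)) into upper Boolean subspaces such that, for each l = 0, 1, …, n, exactly (q−2)^l · C(n,l) of the summands are upper Boolean subspaces of rank n−l. -/

import Mathlib

/-- The support of a `q`-ary `n`-tuple.  The elements of `B_q(n)` are encoded as
`n`-tuples with entries in `{0,1,…,q-1}`. -/
def supp {n q : ℕ} (a : Fin n → Fin q) : Finset (Fin n) :=
  Finset.univ.filter (fun i => (a i : ℕ) ≠ 0)

/-- The rank of an element of `B_q(n)`. -/
def rk {n q : ℕ} (a : Fin n → Fin q) : ℕ := (supp a).card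

/-- The covering relation of the poset `B_q(n)`. -/
def covers {n q : ℕ} (a b : Fin n → Fin q) : Prop :=
  supp a ⊆ supp b ∧ (supp a).card + 1 = (supp b).card ∧ ∀ i ∈ supp a, a i = b i

/-- `V(B_q(n))`: the complex inner product space with the elements of `B_q(n)` as an
orthonormal basis. -/
abbrev VQ (n q : ℕ) := EuclideanSpace ℂ (Fin n → Fin q)

/-- `V(B(t))`: the complex inner product space with the subsets of `[t]` as an
orthonormal basis. -/
abbrev VB (t : ℕ) := EuclideanSpace ℂ (Finset (Fin t))

open scoped Classical in
/-- The up operator on `V(B_q(n))`. -/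
noncomputable def upQ (n q : ℕ) (f : VQ n q) : VQ n q := WithLp.toLp 2 (fun b =>
  ∑ a ∈ Finset.univ.filter (fun a => covers a b), f a)

/-- The up operator on `V(B(t))`. -/
noncomputable def upB (t : ℕ) (f : VB t) : VB t := WithLp.toLp 2 (fun T =>
  ∑ S ∈ T.powerset.filter (fun S => S.card + 1 = T.card), f S)

/-- Homogeneity of rank `r` in `V(B_q(n))`. -/
def isHomQ {n q : ℕ} (r : ℕ) (f : VQ n q) : Prop :=
  ∀ a : Fin n → Fin q, rk a ≠ r → f a = 0

/-- Homogeneity of rank `r` in `V(B(t))`. -/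
def isHomB {t : ℕ} (r : ℕ) (f : VB t) : Prop :=
  ∀ S : Finset (Fin t), S.card ≠ r → f S = 0

/-- The homogeneous component of rank `r` of a vector of `V(B_q(n))`. -/
noncomputable def homComp {n q : ℕ} (r : ℕ) (f : VQ n q) : VQ n q := WithLp.toLp 2 (fun a =>
  if rk a = r then f a else 0)

/-- An upper Boolean subspace of rank `t`: a homogeneous subspace `W` of `V(B_q(n))` with
rank set `{n-t, …, n}`, closed under the up operator, for which there is a linear isometry
`θ : V(B(t)) → V(B_q(n))` with range `W` that sends homogeneous elements to homogeneous
elements, increases rank by `n-t`, and intertwines `√(q-1)·U` with `U`. -/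
def IsUpperBooleanSubspace (q n t : ℕ) (W : Submodule ℂ (VQ n q)) : Prop :=
  t ≤ n ∧
  (∀ f ∈ W, ∀ r : ℕ, homComp r f ∈ W) ∧
  {r : ℕ | ∃ f ∈ W, f ≠ 0 ∧ isHomQ r f} = Set.Icc (n - t) n ∧
  (∀ f ∈ W, upQ n q f ∈ W) ∧
  ∃ θ : VB t →ₗᵢ[ℂ] VQ n q,
    LinearMap.range θ.toLinearMap = W ∧
    (∀ (f : VB t) (r : ℕ), isHomB r f → isHomQ (r + (n - t)) (θ f)) ∧
    (∀ f : VB t, θ (((Real.sqrt ((q - 1 : ℕ)) : ℝ) : ℂ) • upB t f) = upQ n q (θ f))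

/-! The claw `B_q(1)` has the orthonormal basis `ψ₀ = δ₀`, `ψ₁ = (q-1)^{-1/2} ∑_{x ≠ 0} δₓ`,
`ψ₂, …, ψ_{q-1}` (any completion), and its up operator sends `ψ₀ ↦ √(q-1) ψ₁` and kills all
other `ψₖ`. The up operator of `B_q(n)` acts on one coordinate at a time, so on the orthonormal
product basis `Φ_u = ⊗ᵢ ψ_{u i}` it acts by `U Φ_u = √(q-1) ∑_{u i = 0} Φ_{u[i ↦ 1]}`.
Group the words `u` by the positions and values of their letters `≥ 2`. A group with `l` such
positions consists of the words with letters `0, 1` on the other `n - l` positions; sending `S` to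
`Φ` of the word with letter `1` exactly on `S` among these embeds `V(B(n-l))` isometrically onto
the span of the group and turns `√(q-1) U` into `U`. There are `(q-2)^l C(n,l)` such groups. -/

open Finset

namespace EuclideanSpace

variable {𝕜 κ α : Type*} [RCLike 𝕜]

theorem linearMap_apply_eq_sum [Fintype κ] [DecidableEq κ]
    (L : EuclideanSpace 𝕜 κ →ₗ[𝕜] EuclideanSpace 𝕜 α) (f : EuclideanSpace 𝕜 κ) (a : α) :
    L f a = ∑ k, f k * L (single k 1) a := by
  conv_lhs => rw [← (basisFun κ 𝕜).sum_repr f]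
  simp [map_sum, WithLp.ofLp_sum]

def sumOverₗ {β : Type*} (s : β → Finset α) : EuclideanSpace 𝕜 α →ₗ[𝕜] EuclideanSpace 𝕜 β where
  toFun f := WithLp.toLp 2 fun b => ∑ a ∈ s b, f a
  map_add' f g := by ext; simp [Finset.sum_add_distrib]
  map_smul' c f := by ext; simp [Finset.mul_sum]

end EuclideanSpace

section OrthonormalFamily

variable {𝕜 E κ : Type*} [RCLike 𝕜] [NormedAddCommGroup E] [InnerProductSpace 𝕜 E]
  [Fintype κ] {v : κ → E}

noncomputable def Orthonormal.euclideanIsometry (hv : Orthonormal 𝕜 v) :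
    EuclideanSpace 𝕜 κ →ₗᵢ[𝕜] E :=
  LinearMap.isometryOfOrthonormal ((EuclideanSpace.basisFun κ 𝕜).toBasis.constr 𝕜 v)
    (v := (EuclideanSpace.basisFun κ 𝕜).toBasis)
    (by rw [OrthonormalBasis.coe_toBasis]; exact (EuclideanSpace.basisFun κ 𝕜).orthonormal)
    (by
      have : (EuclideanSpace.basisFun κ 𝕜).toBasis.constr 𝕜 v ∘
          (EuclideanSpace.basisFun κ 𝕜).toBasis = v :=
        funext fun k => Module.Basis.constr_basis _ _ _ k
      rwa [this])

theorem Orthonormal.euclideanIsometry_single [DecidableEq κ] (hv : Orthonormal 𝕜 v) (k : κ) :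
    hv.euclideanIsometry (EuclideanSpace.single k 1) = v k := by
  have := Module.Basis.constr_basis (EuclideanSpace.basisFun κ 𝕜).toBasis 𝕜 v k
  rwa [OrthonormalBasis.coe_toBasis, EuclideanSpace.basisFun_apply] at this

theorem Orthonormal.range_euclideanIsometry (hv : Orthonormal 𝕜 v) :
    LinearMap.range hv.euclideanIsometry.toLinearMap = Submodule.span 𝕜 (Set.range v) :=
  Module.Basis.constr_range _ _

end OrthonormalFamily

theorem prod_apply_update {ι α β : Type*} [Fintype ι] [DecidableEq ι] [CommMonoid β]
    (F : ι → α → β) (b : ι → α) (i : ι) (x : α) :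
    ∏ j, F j (Function.update b i x j) = F i x * ∏ j ∈ univ.erase i, F j (b j) := by
  rw [← mul_prod_erase univ _ (mem_univ i), Function.update_self]
  congr 1
  exact prod_congr rfl fun j hj => by rw [Function.update_of_ne (ne_of_mem_erase hj)]

section Tensor

variable {ι κ α : Type*} [Fintype ι]

noncomputable def tensorVec (ψ : κ → EuclideanSpace ℂ α) (u : ι → κ) :
    EuclideanSpace ℂ (ι → α) :=
  WithLp.toLp 2 fun a => ∏ i, ψ (u i) (a i)

@[simp]
theorem tensorVec_apply (ψ : κ → EuclideanSpace ℂ α) (u : ι → κ) (a : ι → α) :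
    tensorVec ψ u a = ∏ i, ψ (u i) (a i) := rfl

variable [DecidableEq ι] [Fintype α]

theorem inner_tensorVec (ψ : κ → EuclideanSpace ℂ α) (u u' : ι → κ) :
    inner ℂ (tensorVec ψ u) (tensorVec ψ u') = ∏ i, inner ℂ (ψ (u i)) (ψ (u' i)) := by
  simp only [PiLp.inner_apply, RCLike.inner_apply, tensorVec_apply, map_prod,
    ← Finset.prod_mul_distrib, Finset.prod_univ_sum, Fintype.piFinset_univ]

theorem Orthonormal.tensorVec {ψ : κ → EuclideanSpace ℂ α} (hψ : Orthonormal ℂ ψ) :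
    Orthonormal ℂ (tensorVec ψ : (ι → κ) → _) := by
  classical
  rw [orthonormal_iff_ite] at hψ ⊢
  intro u u'
  simp only [inner_tensorVec, hψ, prod_boole, mem_univ, true_implies, funext_iff]

theorem span_tensorVec_eq_top [Fintype κ] [DecidableEq κ]
    (ψ : OrthonormalBasis κ ℂ (EuclideanSpace ℂ α)) :
    Submodule.span ℂ (Set.range (tensorVec ψ : (ι → κ) → _)) = ⊤ := by
  refine ψ.orthonormal.tensorVec.linearIndependent.span_eq_top_of_card_eq_finrank' ?_
  rw [finrank_euclideanSpace, Fintype.card_fun, Fintype.card_fun,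
    ← Module.finrank_eq_card_basis ψ.toBasis, finrank_euclideanSpace]

end Tensor

theorem card_filter_card_ne_none {α β : Type*} [Fintype α] [DecidableEq α] [Fintype β]
    [DecidableEq β] (l : ℕ) :
    #{c : α → Option β | #{i | c i ≠ none} = l} =
      (Fintype.card α).choose l * Fintype.card β ^ l := by
  have hfiber (s : Finset α) :
      #{c : α → Option β | ({i | c i ≠ none} : Finset α) = s} = Fintype.card β ^ #s := by
    have : ({c : α → Option β | ({i | c i ≠ none} : Finset α) = s} : Finset _) =
        Fintype.piFinset fun i => if i ∈ s then univ.erase none else {none} := by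
      ext c
      simp only [mem_filter, mem_univ, true_and, Fintype.mem_piFinset, Finset.ext_iff]
      refine forall_congr' fun i => ?_
      split_ifs with hi <;> simp [hi]
    simp only [this, Fintype.card_piFinset, apply_ite card, card_erase_of_mem (mem_univ _),
      card_univ, Fintype.card_option, card_singleton, add_tsub_cancel_right, Fintype.prod_ite_mem,
      prod_const]
  rw [card_eq_sum_card_fiberwise (f := fun c => ({i | c i ≠ none} : Finset α))
    (t := powersetCard l univ) (fun c hc => by simpa using hc)]
  rw [sum_congr rfl fun s hs => ?_, sum_const, card_powersetCard, card_univ, smul_eq_mul]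
  rw [filter_filter, ← (mem_powersetCard.mp hs).2, ← hfiber s]
  exact congrArg card (filter_congr fun c _ => and_iff_right_of_imp (· ▸ rfl))

section UpOperators

variable {n q : ℕ}

theorem mem_supp {a : Fin n → Fin q} {i : Fin n} : i ∈ supp a ↔ (a i : ℕ) ≠ 0 := by
  simp [supp]

theorem supp_update_zero [NeZero q] (b : Fin n → Fin q) (i : Fin n) :
    supp (Function.update b i 0) = (supp b).erase i := by
  ext j
  rcases eq_or_ne j i with rfl | hji <;> simp [mem_supp, *]

theorem covers_iff [NeZero q] {a b : Fin n → Fin q} :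
    covers a b ↔ ∃ i ∈ supp b, a = Function.update b i 0 := by
  constructor
  · rintro ⟨hsub, hcard, hagree⟩
    obtain ⟨i, hia, hins⟩ := Finset.exists_eq_insert_iff.mpr ⟨hsub, hcard⟩
    refine ⟨i, hins ▸ mem_insert_self i _, funext fun j => ?_⟩
    rcases eq_or_ne j i with rfl | hji
    · rw [Function.update_self]
      exact Fin.ext (by simpa [mem_supp] using hia)
    · rw [Function.update_of_ne hji]
      by_cases hja : j ∈ supp a
      · exact hagree j hja
      · have hjb : j ∉ supp b := by simp [← hins, hji, hja]
        simp only [mem_supp, not_not] at hja hjb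
        exact Fin.ext (hja.trans hjb.symm)
  · rintro ⟨i, hib, rfl⟩
    refine ⟨?_, ?_, fun j hj => ?_⟩
    · rw [supp_update_zero]; exact erase_subset i _
    · rw [supp_update_zero, card_erase_add_one hib]
    · rw [supp_update_zero] at hj
      exact Function.update_of_ne (ne_of_mem_erase hj) _ _

theorem upQ_apply [NeZero q] (f : VQ n q) (b : Fin n → Fin q) :
    upQ n q f b = ∑ i ∈ supp b, f (Function.update b i 0) := by
  classical
  have hcovered : univ.filter (covers · b) = (supp b).image (Function.update b · 0) := by
    ext a
    simp [covers_iff, eq_comm]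
  rw [upQ, PiLp.toLp_apply, hcovered, sum_image]
  intro i hi j _ hij
  by_contra hne
  have := congrFun hij i
  simp only [Function.update_self, Function.update_of_ne hne] at this
  simp [mem_supp, ← this] at hi

theorem upQ_eq_sumOverₗ (n q : ℕ) :
    upQ n q =
      EuclideanSpace.sumOverₗ (fun b => open scoped Classical in univ.filter (covers · b)) :=
  rfl

theorem upB_eq_sumOverₗ (t : ℕ) :
    upB t = EuclideanSpace.sumOverₗ (fun T : Finset (Fin t) => T.powerset.filter (#· + 1 = #T)) :=
  rfl

theorem upB_single {t : ℕ} (S : Finset (Fin t)) :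
    upB t (EuclideanSpace.single S 1) = ∑ j ∈ Sᶜ, EuclideanSpace.single (insert j S) 1 := by
  rw [← sum_image (f := fun T => EuclideanSpace.single T (1 : ℂ)) (g := (insert · S))
    fun i hi j _ hij => (insert_inj (mem_compl.mp hi)).mp hij]
  ext T
  simp only [upB, PiLp.toLp_apply, PiLp.single_apply, WithLp.ofLp_sum, Finset.sum_apply,
    sum_ite_eq', sum_ite_eq, mem_filter, mem_powerset, mem_image, mem_compl,
    ← exists_eq_insert_iff]

end UpOperators

section UpperBoolean

variable {q n t : ℕ} (θ : VB t →ₗᵢ[ℂ] VQ n q)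

theorem map_smul_upB_of_single {c : ℂ}
    (hup : ∀ S, θ (c • upB t (EuclideanSpace.single S 1)) =
      upQ n q (θ (EuclideanSpace.single S 1)))
    (f : VB t) : θ (c • upB t f) = upQ n q (θ f) := by
  rw [upB_eq_sumOverₗ, upQ_eq_sumOverₗ] at hup ⊢
  have : θ.toLinearMap ∘ₗ (c • EuclideanSpace.sumOverₗ _) =
      EuclideanSpace.sumOverₗ _ ∘ₗ θ.toLinearMap :=
    (EuclideanSpace.basisFun _ ℂ).toBasis.ext fun S => by simpa using hup S
  exact LinearMap.congr_fun this f

variable (hhom : ∀ S : Finset (Fin t), isHomQ (#S + (n - t)) (θ (EuclideanSpace.single S 1)))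
include hhom

theorem isHomQ_map_of_single {f : VB t} {r : ℕ} (hf : isHomB r f) :
    isHomQ (r + (n - t)) (θ f) := by
  intro a ha
  rw [← θ.coe_toLinearMap, EuclideanSpace.linearMap_apply_eq_sum]
  refine sum_eq_zero fun S _ => ?_
  by_cases hS : #S = r
  · rw [θ.coe_toLinearMap, hhom S a (hS ▸ ha), mul_zero]
  · rw [hf S hS, zero_mul]

theorem homComp_map_of_single (r : ℕ) (f : VB t) :
    homComp r (θ f) = θ (WithLp.toLp 2 fun S => if #S + (n - t) = r then f S else 0) := by
  ext a
  simp only [homComp, PiLp.toLp_apply]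
  rw [← θ.coe_toLinearMap, EuclideanSpace.linearMap_apply_eq_sum,
    EuclideanSpace.linearMap_apply_eq_sum]
  simp only [LinearIsometry.coe_toLinearMap]
  by_cases h : rk a = r
  · rw [if_pos h]
    refine sum_congr rfl fun S _ => ?_
    split_ifs with hS
    · rfl
    · rw [hhom S a (by omega), mul_zero, zero_mul]
  · rw [if_neg h]
    refine (sum_eq_zero fun S _ => ?_).symm
    split_ifs with hS
    · rw [hhom S a (by omega), mul_zero]
    · rw [zero_mul]

theorem sub_le_rk_of_map_apply_ne_zero {f : VB t} {a : Fin n → Fin q} (h : θ f a ≠ 0) :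
    n - t ≤ rk a := by
  rw [← θ.coe_toLinearMap, EuclideanSpace.linearMap_apply_eq_sum] at h
  obtain ⟨S, -, hS⟩ := exists_ne_zero_of_sum_ne_zero h
  by_contra hlt
  exact right_ne_zero_of_mul hS (hhom S a (by omega))

theorem rankSet_range :
    {r | ∃ f ∈ LinearMap.range θ.toLinearMap, f ≠ 0 ∧ isHomQ r f} = Set.Icc (n - t) n := by
  ext r
  constructor
  · rintro ⟨_, ⟨f, rfl⟩, hne, hr⟩
    obtain ⟨a, ha⟩ : ∃ a, θ f a ≠ 0 := by
      by_contra! h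
      exact hne (PiLp.ext h)
    have hra : rk a = r := by
      by_contra h
      exact ha (hr a h)
    exact ⟨hra ▸ sub_le_rk_of_map_apply_ne_zero θ hhom ha,
      hra ▸ (card_le_univ _).trans_eq (Fintype.card_fin n)⟩
  · rintro ⟨hlo, hhi⟩
    obtain ⟨S, -, hS⟩ := exists_subset_card_eq (s := (univ : Finset (Fin t)))
      (n := r - (n - t)) (by rw [card_univ, Fintype.card_fin]; omega)
    refine ⟨θ (EuclideanSpace.single S 1), LinearMap.mem_range_self _ _,
      fun h => by simpa using congrArg norm h, ?_⟩
    simpa [hS, Nat.sub_add_cancel hlo] using hhom S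

theorem isUpperBooleanSubspace_range (ht : t ≤ n)
    (hup : ∀ S, θ (((√((q - 1 : ℕ) : ℝ) : ℝ) : ℂ) • upB t (EuclideanSpace.single S 1)) =
      upQ n q (θ (EuclideanSpace.single S 1))) :
    IsUpperBooleanSubspace q n t (LinearMap.range θ.toLinearMap) := by
  refine ⟨ht, ?_, rankSet_range θ hhom, ?_, θ, rfl,
    fun f r hf => isHomQ_map_of_single θ hhom hf, map_smul_upB_of_single θ hup⟩
  · rintro _ ⟨f, rfl⟩ r
    rw [LinearIsometry.coe_toLinearMap, homComp_map_of_single θ hhom]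
    exact LinearMap.mem_range_self _ _
  · rintro _ ⟨f, rfl⟩
    rw [LinearIsometry.coe_toLinearMap, ← map_smul_upB_of_single θ hup]
    exact LinearMap.mem_range_self _ _

end UpperBoolean

section ClawBasis

variable {n m : ℕ}

noncomputable def clawTopVec (m : ℕ) : EuclideanSpace ℂ (Fin (m + 2)) :=
  WithLp.toLp 2 fun x => if x = 0 then 0 else ((√((m + 1 : ℕ) : ℝ) : ℝ) : ℂ)⁻¹

theorem norm_clawTopVec : ‖clawTopVec m‖ = 1 := by
  have hpos : (0 : ℝ) ≤ m + 1 := by positivity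
  rw [EuclideanSpace.norm_eq, Real.sqrt_eq_one, Fin.sum_univ_succ]
  simp [clawTopVec, Fin.succ_ne_zero, Real.sq_sqrt hpos, Nat.cast_add_one_ne_zero]

theorem exists_clawBasis :
    ∃ ψ : OrthonormalBasis (Fin (m + 2)) ℂ (EuclideanSpace ℂ (Fin (m + 2))),
      ψ 0 = EuclideanSpace.single 0 1 ∧ ψ 1 = clawTopVec m := by
  let v : Fin (m + 2) → EuclideanSpace ℂ (Fin (m + 2)) :=
    fun k => if k = 0 then EuclideanSpace.single 0 1 else clawTopVec m
  have htop : clawTopVec m 0 = 0 := by simp [clawTopVec]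
  have hv : Orthonormal ℂ (({0, 1} : Set (Fin (m + 2))).domRestrict v) := by
    rw [orthonormal_iff_ite]
    rintro ⟨i, hi | hi⟩ ⟨j, hj | hj⟩ <;> subst hi hj <;>
      simp [v, norm_clawTopVec, EuclideanSpace.inner_single_left,
        EuclideanSpace.inner_single_right, htop, Subtype.ext_iff]
  obtain ⟨ψ, hψ⟩ := hv.exists_orthonormalBasis_extension_of_card_eq (by simp)
  exact ⟨ψ, by simpa [v] using hψ 0 (by simp), by simpa [v] using hψ 1 (by simp)⟩

variable {ψ : OrthonormalBasis (Fin (m + 2)) ℂ (EuclideanSpace ℂ (Fin (m + 2)))}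
  (hψ0 : ψ 0 = EuclideanSpace.single 0 1)
include hψ0

theorem apply_zero_of_eq_single (k : Fin (m + 2)) : ψ k 0 = if k = 0 then 1 else 0 := by
  have := orthonormal_iff_ite.mp ψ.orthonormal 0 k
  rw [hψ0, EuclideanSpace.inner_single_left, map_one, one_mul] at this
  simp [this, eq_comm]

theorem eq_zero_iff_of_apply_ne_zero {k x : Fin (m + 2)} (h : ψ k x ≠ 0) : x = 0 ↔ k = 0 := by
  constructor
  · rintro rfl
    simpa [apply_zero_of_eq_single hψ0] using h
  · rintro rfl
    simpa [hψ0] using h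

theorem isHomQ_tensorVec (u : Fin n → Fin (m + 2)) : isHomQ (rk u) (tensorVec ψ u) := by
  intro a ha
  by_contra h
  refine ha (congrArg card (Finset.ext fun i => ?_))
  rw [tensorVec_apply] at h
  have hi := eq_zero_iff_of_apply_ne_zero hψ0 (prod_ne_zero_iff.mp h i (mem_univ i))
  simp [mem_supp, Fin.val_eq_zero_iff, hi]

theorem upQ_tensorVec (hψ1 : ψ 1 = clawTopVec m) (u : Fin n → Fin (m + 2)) :
    upQ n (m + 2) (tensorVec ψ u) = ((√((m + 1 : ℕ) : ℝ) : ℝ) : ℂ) •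
      ∑ i ∈ univ.filter (u · = 0), tensorVec ψ (Function.update u i 1) := by
  have hsqrt : ((√((m : ℝ) + 1) : ℝ) : ℂ) ≠ 0 := by
    norm_cast
    exact (Real.sqrt_pos.mpr (by positivity)).ne'
  ext b
  rw [upQ_apply, PiLp.smul_apply, WithLp.ofLp_sum, Finset.sum_apply, smul_eq_mul, Finset.mul_sum,
    supp, sum_filter, sum_filter]
  refine sum_congr rfl fun i _ => ?_
  simp only [tensorVec_apply, prod_apply_update, prod_apply_update (fun j k => ψ k (b j)) u i 1,
    apply_zero_of_eq_single hψ0, hψ1, clawTopVec, PiLp.toLp_apply]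
  by_cases hu : u i = 0 <;> by_cases hb : b i = 0 <;>
    simp [hu, hb, Fin.val_eq_zero_iff, mul_inv_cancel_left₀ hsqrt]

end ClawBasis

section Words

variable {n m : ℕ}

/-- The summands are indexed by types `c`: position `i` is free if `c i = none`, and carries the
fixed letter `v + 2` if `c i = some v`. -/
def freeCoords (c : Fin n → Option (Fin m)) : Finset (Fin n) := univ.filter (c · = none)

def wordOf (c : Fin n → Option (Fin m)) (A : Finset (Fin n)) : Fin n → Fin (m + 2) :=
  fun i => (c i).elim (if i ∈ A then 1 else 0) (Fin.addNat · 2)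

def typeOf (u : Fin n → Fin (m + 2)) : Fin n → Option (Fin m) :=
  fun i => if h : 2 ≤ (u i : ℕ) then some ⟨u i - 2, by omega⟩ else none

theorem typeOf_wordOf (c : Fin n → Option (Fin m)) (A : Finset (Fin n)) :
    typeOf (wordOf c A) = c := by
  funext i
  rcases hc : c i with _ | v
  · by_cases hi : i ∈ A <;> simp [typeOf, wordOf, hc, hi]
  · simp [typeOf, wordOf, hc]

theorem wordOf_typeOf (u : Fin n → Fin (m + 2)) :
    wordOf (typeOf u) (univ.filter (u · = 1)) = u := by
  funext i
  by_cases h2 : 2 ≤ (u i : ℕ)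
  · simp [typeOf, wordOf, h2, Fin.ext_iff]
  · simp only [typeOf, wordOf, h2, dite_false, Option.elim_none, mem_filter, mem_univ, true_and]
    split_ifs with h1
    · exact h1.symm
    · simp only [Fin.ext_iff, Fin.val_one, Fin.val_zero] at h1 ⊢
      omega

theorem wordOf_eq_zero_iff {c : Fin n → Option (Fin m)} {A : Finset (Fin n)} {i : Fin n} :
    wordOf c A i = 0 ↔ i ∈ freeCoords c \ A := by
  rcases hc : c i with _ | v
  · by_cases hi : i ∈ A <;> simp [freeCoords, wordOf, hc, hi]
  · simp [freeCoords, wordOf, hc, Fin.ext_iff]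

theorem wordOf_eq_one_iff {c : Fin n → Option (Fin m)} {A : Finset (Fin n)} {i : Fin n} :
    wordOf c A i = 1 ↔ i ∈ freeCoords c ∩ A := by
  rcases hc : c i with _ | v
  · by_cases hi : i ∈ A <;> simp [freeCoords, wordOf, hc, hi]
  · simp [freeCoords, wordOf, hc, Fin.ext_iff]

theorem update_wordOf {c : Fin n → Option (Fin m)} (A : Finset (Fin n)) {i : Fin n}
    (hi : i ∈ freeCoords c) : Function.update (wordOf c A) i 1 = wordOf c (insert i A) := by
  funext j
  rcases eq_or_ne j i with rfl | hji
  · simp_all [wordOf, freeCoords]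
  · simp [wordOf, hji]

theorem rk_wordOf {c : Fin n → Option (Fin m)} {A : Finset (Fin n)} (hA : A ⊆ freeCoords c) :
    rk (wordOf c A) = #A + (n - #(freeCoords c)) := by
  have hsupp : supp (wordOf c A) = (freeCoords c \ A)ᶜ := by
    ext i
    simp [mem_supp, Fin.val_eq_zero_iff, wordOf_eq_zero_iff]
  have hfree := card_le_univ (freeCoords c)
  rw [Fintype.card_fin] at hfree
  rw [rk, hsupp, card_compl, card_sdiff_of_subset hA, Fintype.card_fin]
  have := card_le_card hA
  omega

theorem card_setOf_card_freeCoords {l : ℕ} (hl : l ≤ n) :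
    Nat.card {c : Fin n → Option (Fin m) // #(freeCoords c) = n - l} = m ^ l * n.choose l := by
  rw [Nat.card_eq_fintype_card, Fintype.card_subtype]
  have hsplit (c : Fin n → Option (Fin m)) : #(freeCoords c) + #{i | c i ≠ none} = n := by
    simpa [freeCoords] using card_filter_add_card_filter_not (s := univ) (p := fun i => c i = none)
  rw [filter_congr fun c _ => show #(freeCoords c) = n - l ↔ #{i | c i ≠ none} = l by
    have := hsplit c; omega, card_filter_card_ne_none]
  simp [mul_comm]

end Words

section Summands

variable {n m : ℕ} (ψ : OrthonormalBasis (Fin (m + 2)) ℂ (EuclideanSpace ℂ (Fin (m + 2))))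

def freeEmb (c : Fin n → Option (Fin m)) : Fin #(freeCoords c) ↪ Fin n :=
  ((freeCoords c).orderEmbOfFin rfl).toEmbedding

theorem map_freeEmb_univ (c : Fin n → Option (Fin m)) : univ.map (freeEmb c) = freeCoords c :=
  map_orderEmbOfFin_univ _ _

theorem map_freeEmb_subset (c : Fin n → Option (Fin m)) (S : Finset (Fin #(freeCoords c))) :
    S.map (freeEmb c) ⊆ freeCoords c := by
  intro i hi
  obtain ⟨j, -, rfl⟩ := mem_map.mp hi
  exact orderEmbOfFin_mem _ rfl j

theorem wordOf_map_freeEmb_injective (c : Fin n → Option (Fin m)) :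
    Function.Injective fun S : Finset (Fin #(freeCoords c)) => wordOf c (S.map (freeEmb c)) := by
  have hones (S : Finset (Fin #(freeCoords c))) :
      univ.filter (wordOf c (S.map (freeEmb c)) · = 1) = S.map (freeEmb c) := by
    ext i
    simp only [mem_filter, mem_univ, true_and, wordOf_eq_one_iff,
      inter_eq_right.mpr (map_freeEmb_subset c S)]
  intro S S' h
  apply map_injective (freeEmb c)
  rw [← hones S, ← hones S']
  exact congrArg (fun w => univ.filter (w · = 1)) h

theorem exists_wordOf_map_freeEmb (u : Fin n → Fin (m + 2)) :
    ∃ S : Finset (Fin #(freeCoords (typeOf u))),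
      wordOf (typeOf u) (S.map (freeEmb (typeOf u))) = u := by
  have hsub : univ.filter (u · = 1) ⊆ freeCoords (typeOf u) := by
    intro i hi
    simp_all [freeCoords, typeOf]
  obtain ⟨S, -, hS⟩ := subset_map_iff.mp (hsub.trans (map_freeEmb_univ _).ge)
  exact ⟨S, hS ▸ wordOf_typeOf u⟩

noncomputable def booleanVec (c : Fin n → Option (Fin m)) (S : Finset (Fin #(freeCoords c))) :
    VQ n (m + 2) :=
  tensorVec ψ (wordOf c (S.map (freeEmb c)))

theorem orthonormal_booleanVec (c : Fin n → Option (Fin m)) : Orthonormal ℂ (booleanVec ψ c) :=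
  ψ.orthonormal.tensorVec.comp _ (wordOf_map_freeEmb_injective c)

theorem inner_booleanVec_of_ne {c c' : Fin n → Option (Fin m)} (h : c ≠ c')
    (S : Finset (Fin #(freeCoords c))) (S' : Finset (Fin #(freeCoords c'))) :
    inner ℂ (booleanVec ψ c S) (booleanVec ψ c' S') = 0 :=
  ψ.orthonormal.tensorVec.inner_eq_zero fun hw => h (by
    simpa only [typeOf_wordOf] using congrArg typeOf hw)

noncomputable def booleanIsometry (c : Fin n → Option (Fin m)) :
    VB #(freeCoords c) →ₗᵢ[ℂ] VQ n (m + 2) :=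
  (orthonormal_booleanVec ψ c).euclideanIsometry

theorem range_booleanIsometry (c : Fin n → Option (Fin m)) :
    LinearMap.range (booleanIsometry ψ c).toLinearMap =
      Submodule.span ℂ (Set.range (booleanVec ψ c)) :=
  Orthonormal.range_euclideanIsometry _

theorem isOrtho_range_booleanIsometry {c c' : Fin n → Option (Fin m)} (h : c ≠ c') :
    LinearMap.range (booleanIsometry ψ c).toLinearMap ⟂
      LinearMap.range (booleanIsometry ψ c').toLinearMap := by
  rw [range_booleanIsometry, range_booleanIsometry, Submodule.isOrtho_span]
  rintro _ ⟨S, rfl⟩ _ ⟨S', rfl⟩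
  exact inner_booleanVec_of_ne ψ h S S'

theorem tensorVec_mem_range_booleanIsometry (u : Fin n → Fin (m + 2)) :
    tensorVec ψ u ∈ LinearMap.range (booleanIsometry ψ (typeOf u)).toLinearMap := by
  obtain ⟨S, hS⟩ := exists_wordOf_map_freeEmb u
  rw [range_booleanIsometry]
  exact Submodule.subset_span ⟨S, by rw [booleanVec, hS]⟩

variable {ψ} (hψ0 : ψ 0 = EuclideanSpace.single 0 1)
include hψ0

theorem isHomQ_booleanIsometry_single (c : Fin n → Option (Fin m))
    (S : Finset (Fin #(freeCoords c))) :
    isHomQ (#S + (n - #(freeCoords c))) (booleanIsometry ψ c (EuclideanSpace.single S 1)) := by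
  have := isHomQ_tensorVec hψ0 (wordOf c (S.map (freeEmb c)))
  rw [booleanIsometry, Orthonormal.euclideanIsometry_single]
  rwa [rk_wordOf (map_freeEmb_subset c S), card_map] at this

theorem booleanIsometry_upB_single (hψ1 : ψ 1 = clawTopVec m) (c : Fin n → Option (Fin m))
    (S : Finset (Fin #(freeCoords c))) :
    booleanIsometry ψ c (((√((m + 1 : ℕ) : ℝ) : ℝ) : ℂ) • upB _ (EuclideanSpace.single S 1)) =
      upQ n (m + 2) (booleanIsometry ψ c (EuclideanSpace.single S 1)) := by
  have hzeros : univ.filter (wordOf c (S.map (freeEmb c)) · = 0) = Sᶜ.map (freeEmb c) := by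
    ext i
    simp only [mem_filter, mem_univ, true_and, wordOf_eq_zero_iff, compl_eq_univ_sdiff,
      Finset.map_sdiff, map_freeEmb_univ]
  simp only [booleanIsometry, upB_single, map_smul, map_sum, Orthonormal.euclideanIsometry_single,
    booleanVec, upQ_tensorVec hψ0 hψ1, hzeros, sum_map]
  congr 1
  refine sum_congr rfl fun j _ => ?_
  rw [update_wordOf _ (map_freeEmb_subset c {j} (by simp)), map_insert]

end Summands

/-- `V(B_q(n))` admits an orthogonal direct sum decomposition into upper Boolean
subspaces, with exactly `(q-2)^l · C(n,l)` summands of rank `n-l`, for each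
`l = 0, 1, …, n`. -/
theorem orthogonal_decomposition_upper_boolean (q n : ℕ) (hq : 2 ≤ q) :
    ∃ (ι : Type) (_ : Fintype ι) (W : ι → Submodule ℂ (VQ n q)) (t : ι → ℕ),
      (∀ c c', c ≠ c' → ∀ f ∈ W c, ∀ g ∈ W c', inner ℂ f g = (0 : ℂ)) ∧
      (⨆ c, W c) = ⊤ ∧
      (∀ c, IsUpperBooleanSubspace q n (t c) (W c)) ∧
      (∀ l : ℕ, l ≤ n →
        Nat.card {c : ι // t c = n - l} = (q - 2) ^ l * n.choose l) := by
  obtain ⟨m, rfl⟩ : ∃ m, q = m + 2 := ⟨q - 2, by omega⟩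
  obtain ⟨ψ, hψ0, hψ1⟩ := exists_clawBasis (m := m)
  refine ⟨Fin n → Option (Fin m), inferInstance,
    fun c => LinearMap.range (booleanIsometry ψ c).toLinearMap, fun c => #(freeCoords c),
    fun c c' hcc' _ hf _ hg => (isOrtho_range_booleanIsometry ψ hcc').inner_eq hf hg, ?_,
    fun c => ?_, fun l hl => by simpa using card_setOf_card_freeCoords (m := m) hl⟩
  · rw [eq_top_iff, ← span_tensorVec_eq_top ψ, Submodule.span_le]
    rintro _ ⟨u, rfl⟩
    exact Submodule.mem_iSup_of_mem (typeOf u) (tensorVec_mem_range_booleanIsometry ψ u)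
  · exact isUpperBooleanSubspace_range _ (isHomQ_booleanIsometry_single hψ0 c)
      ((card_le_univ _).trans_eq (Fintype.card_fin n)) (booleanIsometry_upB_single hψ0 hψ1 c)
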